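/- arXiv:1511.08624 — 2 statements merged into one kernel-verified Lean document; each statement's English description precedes it below -/
import Mathlib

section
/- Let q ∈ (0,1/k), Q, Q* ∈ Δ_k^k(q), μ, μ* ∈ Δ_k(q), f, f* ∈ F^k, and let y_1,…,y_{t−1} ∈ ℝ^d satisfy Σ_j f_j(y_s) > 0 and Σ_j f*_j(y_s) > 0 for all 1 ≤ s ≤ t−1. Let w_s and w*_s denote the prediction filters associated with (μ,Q,f) and (μ*,Q*,f*) respectively on y_{1:s−1}, and for 1 ≤ s ≤ t−1 set Δ_s = ‖Q−Q*‖/q + min( (1/q)·(Σ_i |f*_i(y_s) − f_i(y_s)| w*_{s,i})/(Σ_j f*_j(y_s) w*_{s,j}), k ). Then, with ρ = (1−kq)/(1−(k−1)q): Σ_{i=1}^k |w*_{t,i} − w_{t,i}| ≤ (2/ρ) Σ_{u=1}^{t−1} ρ^u Δ_{t−u} + 4ρ^{t−1}. -/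
open MeasureTheory Filter Real

noncomputable section

/-- `μ ∈ Δ_k`: probability vector. -/
def inSimplex {k : ℕ} (μ : Fin k → ℝ) : Prop :=
  (∀ i, 0 ≤ μ i) ∧ ∑ i, μ i = 1

/-- `μ ∈ Δ_k(q)`: probability vector with all entries ≥ q. -/
def inSimplexGe {k : ℕ} (q : ℝ) (μ : Fin k → ℝ) : Prop :=
  inSimplex μ ∧ ∀ i, q ≤ μ i

/-- `Q ∈ Δ_k^k`: row-stochastic matrix. -/
def rowStochastic {k : ℕ} (Q : Fin k → Fin k → ℝ) : Prop :=
  ∀ i, inSimplex (Q i)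

/-- `Q ∈ Δ_k^k(q)`: row-stochastic matrix with all entries ≥ q. -/
def rowStochasticGe {k : ℕ} (q : ℝ) (Q : Fin k → Fin k → ℝ) : Prop :=
  ∀ i, inSimplexGe q (Q i)

/-- `f ∈ F`: probability density function with respect to `lam`. -/
def IsDensity {d : ℕ} (lam : Measure (Fin d → ℝ)) (f : (Fin d → ℝ) → ℝ) : Prop :=
  Measurable f ∧ (∀ y, 0 ≤ f y) ∧ ∫⁻ y, ENNReal.ofReal (f y) ∂lam = 1

/-- joint density `p_n^{μ,Q,f}` of the first `n` observations of the HMM with initial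
distribution `μ`, transition matrix `Q` and emission densities `f`. -/
def hmmJoint {k d : ℕ} (μ : Fin k → ℝ) (Q : Fin k → Fin k → ℝ)
    (f : Fin k → (Fin d → ℝ) → ℝ) (n : ℕ) (y : Fin n → (Fin d → ℝ)) : ℝ :=
  ∑ x : Fin n → Fin k, ∏ t : Fin n,
    (if (t : ℕ) = 0 then μ (x t)
     else Q (x ⟨(t : ℕ) - 1, lt_of_le_of_lt (Nat.sub_le _ _) t.isLt⟩) (x t)) * f (x t) (y t)

/-- prediction filter after `t` observations (paper's `w_{t+1}`, 0-indexed observations). -/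
def predFilter {k d : ℕ} (μ : Fin k → ℝ) (Q : Fin k → Fin k → ℝ)
    (f : Fin k → (Fin d → ℝ) → ℝ) (y : ℕ → (Fin d → ℝ)) : ℕ → Fin k → ℝ
  | 0 => μ
  | t + 1 => fun i =>
      (∑ j, predFilter μ Q f y t j * Q j i * f j (y t)) /
        (∑ j, predFilter μ Q f y t j * f j (y t))

/-- extension of a finite observation vector to an infinite sequence (by `0`). -/
def extSeq {d n : ℕ} (y : Fin n → (Fin d → ℝ)) : ℕ → (Fin d → ℝ) :=
  fun s => if h : s < n then y ⟨s, h⟩ else 0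

/-- `‖Q - Q'‖ = max_{i,j} |Q_{i,j} - Q'_{i,j}|`. -/
def matDist {k : ℕ} (Q Q' : Fin k → Fin k → ℝ) : ℝ :=
  ⨆ i, ⨆ j, |Q i j - Q' i j|

/-- `ρ = (1 - kq)/(1 - (k-1)q)`. -/
def mixRho (k : ℕ) (q : ℝ) : ℝ := (1 - (k : ℝ) * q) / (1 - ((k : ℝ) - 1) * q)

/-!
Interpolate between the two filters by the hybrid filters that use the starred model for the
first `s` observations and the unstarred one afterwards. Switching the model at observation `s`
moves the filter by at most `‖Q - Q*‖ + (Σ |f* - f| w*) / (Σ f* w*)` in every coordinate, and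
the unstarred filter then forgets this perturbation geometrically: after `n` further
observations it is the initial law reweighted by a likelihood and moved by a product of `n`
Doob `h`-transforms of `Q`, and each of these satisfies a Doeblin minorization with constant
`1 - ρ` because the entries of `Q` lie in `[q, 1 - (k - 1) q]`.
-/

open Finset Matrix

section Simplex

variable {k : ℕ} {q : ℝ}

lemma inSimplex.le_one {μ : Fin k → ℝ} (hμ : inSimplex μ) (i : Fin k) : μ i ≤ 1 :=
  hμ.2 ▸ single_le_sum (fun j _ => hμ.1 j) (mem_univ i)

lemma inSimplex.sum_abs_sub_le_two {u v : Fin k → ℝ} (hu : inSimplex u) (hv : inSimplex v) :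
    ∑ i, |u i - v i| ≤ 2 :=
  calc ∑ i, |u i - v i| ≤ ∑ i, (u i + v i) :=
        sum_le_sum fun i _ => abs_le.mpr ⟨by linarith [hu.1 i], by linarith [hv.1 i]⟩
    _ = 2 := by rw [sum_add_distrib, hu.2, hv.2]; norm_num

lemma inSimplexGe_vecMul {u : Fin k → ℝ} {Q : Fin k → Fin k → ℝ} (hu : inSimplex u)
    (hQ : rowStochasticGe q Q) : inSimplexGe q (u ᵥ* Q) := by
  refine ⟨⟨fun i => (sum_nonneg fun j _ => mul_nonneg (hu.1 j) ((hQ j).1.1 i) :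
    0 ≤ ∑ j, u j * Q j i), ?_⟩, fun i => ?_⟩
  · simp only [vecMul, dotProduct]
    rw [sum_comm]
    simp only [← mul_sum, (hQ _).1.2, mul_one, hu.2]
  · calc q = ∑ j, u j * q := by rw [← sum_mul, hu.2, one_mul]
      _ ≤ (u ᵥ* Q) i := sum_le_sum fun j _ => mul_le_mul_of_nonneg_left ((hQ j).2 i) (hu.1 j)

lemma rowStochasticGe.le_one_sub {Q : Fin k → Fin k → ℝ} (hQ : rowStochasticGe q Q)
    (j m : Fin k) : Q j m ≤ 1 - ((k : ℝ) - 1) * q := by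
  have hrest := card_nsmul_le_sum (univ.erase m) (Q j) q fun i _ => (hQ j).2 i
  rw [sum_erase_eq_sub (mem_univ m), (hQ j).1.2, card_erase_of_mem (mem_univ m), card_univ,
    Fintype.card_fin, nsmul_eq_mul, Nat.cast_pred m.pos] at hrest
  linarith

end Simplex

section MixRho

variable {k : ℕ} {q : ℝ}

lemma one_sub_pred_mul_pos (hq0 : 0 < q) (hkq : (k : ℝ) * q < 1) : 0 < 1 - ((k : ℝ) - 1) * q := by
  nlinarith

lemma mixRho_pos (hq0 : 0 < q) (hkq : (k : ℝ) * q < 1) : 0 < mixRho k q :=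
  div_pos (by linarith) (one_sub_pred_mul_pos hq0 hkq)

lemma one_sub_mixRho (hq0 : 0 < q) (hkq : (k : ℝ) * q < 1) :
    1 - mixRho k q = q / (1 - ((k : ℝ) - 1) * q) := by
  have hσ := one_sub_pred_mul_pos hq0 hkq
  rw [mixRho, eq_div_iff hσ.ne', sub_mul, div_mul_cancel₀ _ hσ.ne']
  ring

end MixRho

section Reweight

variable {ι : Type*} [Fintype ι]

def reweight (a g : ι → ℝ) : ι → ℝ := fun j => a j * g j / ∑ l, a l * g l

lemma mul_sum_le_sum_mul_of_le {q : ℝ} {a g : ι → ℝ} (ha : ∀ j, q ≤ a j) (hg : ∀ j, 0 ≤ g j) :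
    q * ∑ j, g j ≤ ∑ j, a j * g j := by
  rw [mul_sum]
  exact sum_le_sum fun j _ => mul_le_mul_of_nonneg_right (ha j) (hg j)

lemma sum_reweight {a g : ι → ℝ} (hS : ∑ j, a j * g j ≠ 0) : ∑ j, reweight a g j = 1 := by
  simp only [reweight, ← sum_div, div_self hS]

lemma reweight_nonneg {a g : ι → ℝ} (ha : ∀ j, 0 ≤ a j) (hg : ∀ j, 0 ≤ g j) (j : ι) :
    0 ≤ reweight a g j :=
  div_nonneg (mul_nonneg (ha j) (hg j)) (sum_nonneg fun l _ => mul_nonneg (ha l) (hg l))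

lemma sum_abs_div_sum_sub_div_sum_le (c e : ι → ℝ) (hc : ∀ i, 0 ≤ c i)
    (hSc : 0 < ∑ i, c i) (hSe : 0 < ∑ i, e i) :
    ∑ i, |c i / ∑ j, c j - e i / ∑ j, e j| ≤ 2 * (∑ i, |c i - e i|) / ∑ j, e j := by
  set Sc := ∑ j, c j
  set Se := ∑ j, e j
  have hsplit : ∀ i, c i / Sc - e i / Se = (c i - e i) / Se + c i / Sc * ((Se - Sc) / Se) := by
    intro i
    field_simp
    ring
  have hSdiff : |Se - Sc| ≤ ∑ i, |c i - e i| := by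
    rw [← sum_sub_distrib]
    exact (abs_sum_le_sum_abs _ _).trans (le_of_eq (sum_congr rfl fun i _ => abs_sub_comm _ _))
  calc ∑ i, |c i / Sc - e i / Se|
      ≤ ∑ i, (|c i - e i| / Se + c i / Sc * (|Se - Sc| / Se)) := by
        refine sum_le_sum fun i _ => ?_
        rw [hsplit]
        refine (abs_add_le _ _).trans (le_of_eq ?_)
        rw [abs_div, abs_mul, abs_div, abs_div, abs_of_pos hSe, abs_of_pos hSc,
          abs_of_nonneg (hc i)]
    _ = (∑ i, |c i - e i|) / Se + |Se - Sc| / Se := by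
        rw [sum_add_distrib, ← sum_div, ← sum_mul, ← sum_div, div_self hSc.ne', one_mul]
    _ ≤ 2 * (∑ i, |c i - e i|) / Se := by
        rw [← add_div, two_mul]
        gcongr

end Reweight

section Filter

variable {k d : ℕ} {q : ℝ} {Q : Fin k → Fin k → ℝ} {f : Fin k → (Fin d → ℝ) → ℝ}

lemma predFilter_succ (μ : Fin k → ℝ) (Q : Fin k → Fin k → ℝ) (f : Fin k → (Fin d → ℝ) → ℝ)
    (y : ℕ → Fin d → ℝ) (t : ℕ) :
    predFilter μ Q f y (t + 1) = reweight (predFilter μ Q f y t) (fun j => f j (y t)) ᵥ* Q := by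
  ext i
  simp only [predFilter, reweight, vecMul, dotProduct, sum_div]
  exact sum_congr rfl fun j _ => by ring

lemma predFilter_add (μ : Fin k → ℝ) (Q : Fin k → Fin k → ℝ) (f : Fin k → (Fin d → ℝ) → ℝ)
    (y : ℕ → Fin d → ℝ) (m n : ℕ) :
    predFilter μ Q f y (m + n) = predFilter (predFilter μ Q f y m) Q f (fun u => y (m + u)) n := by
  induction n with
  | zero => rfl
  | succ n ih => rw [← add_assoc, predFilter_succ, predFilter_succ, ih]

lemma predFilter_inSimplexGe (hq0 : 0 < q) (hQ : rowStochasticGe q Q) (hf0 : ∀ j x, 0 ≤ f j x)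
    {μ : Fin k → ℝ} (hμ : inSimplexGe q μ) (y : ℕ → Fin d → ℝ) (n : ℕ)
    (hpos : ∀ s < n, 0 < ∑ j, f j (y s)) : inSimplexGe q (predFilter μ Q f y n) := by
  induction n with
  | zero => exact hμ
  | succ n ih =>
    have hw := ih fun s hs => hpos s (by omega)
    have hS := (mul_pos hq0 (hpos n (by omega))).trans_le
      (mul_sum_le_sum_mul_of_le hw.2 fun j => hf0 j (y n))
    rw [predFilter_succ]
    exact inSimplexGe_vecMul ⟨reweight_nonneg hw.1.1 (fun j => hf0 j _), sum_reweight hS.ne'⟩ hQ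

end Filter

section Contraction

variable {ι : Type*} [Fintype ι]

/-- `δ` bounds Dobrushin's ergodicity coefficient of `K`. -/
def ContractsZeroSum (K : Matrix ι ι ℝ) (δ : ℝ) : Prop :=
  ∀ η : ι → ℝ, ∑ j, η j = 0 → ∑ i, |(η ᵥ* K) i| ≤ δ * ∑ j, |η j|

lemma contractsZeroSum_one [DecidableEq ι] : ContractsZeroSum (1 : Matrix ι ι ℝ) 1 :=
  fun η _ => by simp

lemma sum_vecMul_of_sum_row_eq_one {K : Matrix ι ι ℝ} (hK : ∀ j, ∑ i, K j i = 1) (η : ι → ℝ) :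
    ∑ i, (η ᵥ* K) i = ∑ j, η j := by
  simp only [vecMul, dotProduct]
  rw [sum_comm]
  simp only [← mul_sum, hK, mul_one]

lemma ContractsZeroSum.mul {K L : Matrix ι ι ℝ} {δ ε : ℝ} (hK : ContractsZeroSum K δ)
    (hL : ContractsZeroSum L ε) (hKrow : ∀ j, ∑ i, K j i = 1) (hε : 0 ≤ ε) :
    ContractsZeroSum (K * L) (ε * δ) := by
  intro η hη
  rw [← vecMul_vecMul, mul_assoc]
  refine (hL _ (by rw [sum_vecMul_of_sum_row_eq_one hKrow, hη])).trans ?_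
  exact mul_le_mul_of_nonneg_left (hK η hη) hε

/-- Centring `c ∈ [0, 1]` at `1 / 2` costs nothing against a zero-sum `η`. -/
lemma abs_sum_mul_le_half {c η : ι → ℝ} (hc0 : ∀ j, 0 ≤ c j) (hc1 : ∀ j, c j ≤ 1)
    (hη : ∑ j, η j = 0) : |∑ j, c j * η j| ≤ (∑ j, |η j|) / 2 := by
  have hcentre : ∑ j, c j * η j = ∑ j, (c j - 1 / 2) * η j := by
    simp only [sub_mul, sum_sub_distrib, ← mul_sum, hη, mul_zero, sub_zero]
  rw [hcentre, sum_div]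
  refine (abs_sum_le_sum_abs _ _).trans (sum_le_sum fun j _ => ?_)
  rw [abs_mul]
  have : |c j - 1 / 2| ≤ 1 / 2 := abs_le.mpr ⟨by linarith [hc0 j], by linarith [hc1 j]⟩
  nlinarith [abs_nonneg (η j)]

/-- Doeblin: zero-sum vectors annihilate the common part `ε ν` of the rows of `K`. -/
lemma contractsZeroSum_of_le {K : Matrix ι ι ℝ} {ν : ι → ℝ} {ε : ℝ}
    (hK : ∀ j, ∑ i, K j i = 1) (hν : ∑ i, ν i = 1) (hmin : ∀ j i, ε * ν i ≤ K j i) :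
    ContractsZeroSum K (1 - ε) := by
  intro η hη
  have hshift : ∀ i, (η ᵥ* K) i = ∑ j, η j * (K j i - ε * ν i) := by
    intro i
    simp only [vecMul, dotProduct, mul_sub, sum_sub_distrib, ← sum_mul, hη, zero_mul, sub_zero]
  calc ∑ i, |(η ᵥ* K) i| ≤ ∑ i, ∑ j, |η j| * (K j i - ε * ν i) := by
        refine sum_le_sum fun i _ => ?_
        rw [hshift]
        refine (abs_sum_le_sum_abs _ _).trans (le_of_eq (sum_congr rfl fun j _ => ?_))
        rw [abs_mul, abs_of_nonneg (sub_nonneg.mpr (hmin j i))]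
    _ = ∑ j, |η j| * (1 - ε) := by
        rw [sum_comm]
        simp only [← mul_sum, sum_sub_distrib, hK, hν, mul_one]
    _ = (1 - ε) * ∑ j, |η j| := by rw [mul_sum]; simp only [mul_comm]

def hTransform (Q : Matrix ι ι ℝ) (h : ι → ℝ) : Matrix ι ι ℝ :=
  fun j l => Q j l * h l / (Q *ᵥ h) j

lemma sum_hTransform {Q : Matrix ι ι ℝ} {h : ι → ℝ} (hD : ∀ j, (Q *ᵥ h) j ≠ 0) (j : ι) :
    ∑ l, hTransform Q h j l = 1 := by
  simp only [hTransform, ← sum_div]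
  exact div_self (hD j)

lemma reweight_vecMul_hTransform {Q : Matrix ι ι ℝ} {a g h : ι → ℝ}
    (hS : ∑ j, a j * g j ≠ 0) (hD : ∀ j, (Q *ᵥ h) j ≠ 0) :
    reweight a (fun j => (Q *ᵥ h) j * g j) ᵥ* hTransform Q h = reweight (reweight a g ᵥ* Q) h := by
  have hden : ∑ l, (reweight a g ᵥ* Q) l * h l =
      (∑ j, a j * ((Q *ᵥ h) j * g j)) / ∑ j, a j * g j := by
    simp only [reweight, vecMul, dotProduct, mulVec, sum_mul, sum_div]
    rw [sum_comm]
    exact sum_congr rfl fun j _ => by rw [mul_sum, sum_div]; exact sum_congr rfl fun l _ => by ring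
  ext l
  calc (reweight a (fun j => (Q *ᵥ h) j * g j) ᵥ* hTransform Q h) l
      = (∑ j, a j * g j * Q j l * h l) / ∑ j, a j * ((Q *ᵥ h) j * g j) := by
        simp only [reweight, vecMul, dotProduct, hTransform, sum_div]
        exact sum_congr rfl fun j _ => by field_simp [hD j]
    _ = reweight (reweight a g ᵥ* Q) h l := by
        rw [← div_div_div_cancel_right₀ hS]
        simp only [reweight] at hden ⊢
        rw [hden]
        congr 1
        simp only [reweight, vecMul, dotProduct, sum_mul, sum_div]
        exact sum_congr rfl fun j _ => by ring

end Contraction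

section Forgetting

variable {k d : ℕ} {q : ℝ} {Q : Fin k → Fin k → ℝ} {f : Fin k → (Fin d → ℝ) → ℝ}

lemma contractsZeroSum_hTransform (hq0 : 0 < q) (hkq : (k : ℝ) * q < 1)
    (hQ : rowStochasticGe q Q) {h : Fin k → ℝ} (hh : ∀ l, 0 ≤ h l) (hhs : 0 < ∑ l, h l) :
    ContractsZeroSum (hTransform Q h) (mixRho k q) := by
  have hD : ∀ j, 0 < (Q *ᵥ h) j := fun j =>
    (mul_pos hq0 hhs).trans_le (mul_sum_le_sum_mul_of_le (hQ j).2 hh)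
  have hDle : ∀ j, (Q *ᵥ h) j ≤ (1 - ((k : ℝ) - 1) * q) * ∑ l, h l := fun j => by
    simp only [mul_sum, mulVec, dotProduct]
    exact sum_le_sum fun l _ => mul_le_mul_of_nonneg_right (hQ.le_one_sub j l) (hh l)
  have hmin : ∀ j l, (1 - mixRho k q) * (h l / ∑ m, h m) ≤ hTransform Q h j l := fun j l => by
    rw [one_sub_mixRho hq0 hkq, div_mul_div_comm]
    exact div_le_div₀ (mul_nonneg ((hQ j).1.1 l) (hh l))
      (mul_le_mul_of_nonneg_right ((hQ j).2 l) (hh l)) (hD j) (hDle j)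
  have := contractsZeroSum_of_le (sum_hTransform fun j => (hD j).ne')
    (by rw [← sum_div, div_self hhs.ne']) hmin
  rwa [sub_sub_cancel] at this

/-- `K` is the product of the `h`-transforms of `Q` by the likelihoods of the remaining
observations, built backwards in time. -/
theorem exists_predFilter_eq_reweight_vecMul [NeZero k] (hq0 : 0 < q) (hkq : (k : ℝ) * q < 1)
    (hQ : rowStochasticGe q Q) (hf0 : ∀ j x, 0 ≤ f j x) (n : ℕ) (y : ℕ → Fin d → ℝ)
    (hpos : ∀ s < n, 0 < ∑ j, f j (y s)) :
    ∃ (β : Fin k → ℝ) (K : Matrix (Fin k) (Fin k) ℝ), (∀ j, 0 ≤ β j) ∧ 0 < ∑ j, β j ∧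
      ContractsZeroSum K (mixRho k q ^ n) ∧
      ∀ a, inSimplexGe q a → predFilter a Q f y n = reweight a β ᵥ* K := by
  induction n generalizing y with
  | zero =>
    refine ⟨1, 1, fun _ => zero_le_one, by simp [Nat.pos_of_neZero k], contractsZeroSum_one,
      fun a ha => ?_⟩
    ext j
    simp [predFilter, reweight, ha.1.2]
  | succ n ih =>
    obtain ⟨β, K, hβ, hβs, hK, hrepr⟩ :=
      ih (fun u => y (1 + u)) fun s hs => hpos (1 + s) (by omega)
    set g : Fin k → ℝ := fun j => f j (y 0)
    have hg : ∀ j, 0 ≤ g j := fun j => hf0 j _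
    have hgs : 0 < ∑ j, g j := hpos 0 (by omega)
    have hD : ∀ j, q * ∑ l, β l ≤ (Q *ᵥ β) j := fun j => mul_sum_le_sum_mul_of_le (hQ j).2 hβ
    have hDpos : ∀ j, 0 < (Q *ᵥ β) j := fun j => (mul_pos hq0 hβs).trans_le (hD j)
    refine ⟨fun j => (Q *ᵥ β) j * g j, hTransform Q β * K,
      fun j => mul_nonneg (hDpos j).le (hg j),
      (mul_pos (mul_pos hq0 hβs) hgs).trans_le (mul_sum_le_sum_mul_of_le hD hg), ?_, ?_⟩
    · rw [pow_succ]
      exact (contractsZeroSum_hTransform hq0 hkq hQ hβ hβs).mul hK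
        (sum_hTransform fun j => (hDpos j).ne') (pow_nonneg (mixRho_pos hq0 hkq).le n)
    · intro a ha
      have hS : 0 < ∑ j, a j * g j := (mul_pos hq0 hgs).trans_le (mul_sum_le_sum_mul_of_le ha.2 hg)
      have hstep : predFilter a Q f y 1 = reweight a g ᵥ* Q := predFilter_succ a Q f y 0
      rw [add_comm, predFilter_add, hstep,
        hrepr _ (inSimplexGe_vecMul ⟨reweight_nonneg ha.1.1 hg, sum_reweight hS.ne'⟩ hQ),
        ← reweight_vecMul_hTransform hS.ne' fun j => (hDpos j).ne', vecMul_vecMul]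

theorem sum_abs_predFilter_sub_le [NeZero k] (hq0 : 0 < q) (hkq : (k : ℝ) * q < 1)
    (hQ : rowStochasticGe q Q) (hf0 : ∀ j x, 0 ≤ f j x) (n : ℕ) (y : ℕ → Fin d → ℝ)
    (hpos : ∀ s < n, 0 < ∑ j, f j (y s)) {a b : Fin k → ℝ} (ha : inSimplexGe q a)
    (hb : inSimplexGe q b) {C : ℝ} (hC : ∀ j, |a j - b j| ≤ C) :
    ∑ i, |predFilter a Q f y n i - predFilter b Q f y n i| ≤
      mixRho k q ^ n * min 2 (2 * C / q) := by
  obtain ⟨β, K, hβ, hβs, hK, hrepr⟩ :=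
    exists_predFilter_eq_reweight_vecMul hq0 hkq hQ hf0 n y hpos
  have hTa := mul_sum_le_sum_mul_of_le ha.2 hβ
  have hTb := mul_sum_le_sum_mul_of_le hb.2 hβ
  have hTa0 := (mul_pos hq0 hβs).trans_le hTa
  have hTb0 := (mul_pos hq0 hβs).trans_le hTb
  have hua : inSimplex (reweight a β) := ⟨reweight_nonneg ha.1.1 hβ, sum_reweight hTa0.ne'⟩
  have hub : inSimplex (reweight b β) := ⟨reweight_nonneg hb.1.1 hβ, sum_reweight hTb0.ne'⟩
  have hC0 : 0 ≤ C := (abs_nonneg _).trans (hC 0)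
  rw [hrepr a ha, hrepr b hb]
  simp only [← Pi.sub_apply (reweight a β ᵥ* K), ← sub_vecMul]
  refine (hK _ (by simp [sum_sub_distrib, hua.2, hub.2])).trans
    (mul_le_mul_of_nonneg_left (le_min (hua.sum_abs_sub_le_two hub) ?_)
      (pow_nonneg (mixRho_pos hq0 hkq).le n))
  calc ∑ j, |(reweight a β - reweight b β) j|
      ≤ 2 * (∑ j, |a j * β j - b j * β j|) / ∑ j, b j * β j :=
        sum_abs_div_sum_sub_div_sum_le _ _ (fun j => mul_nonneg (ha.1.1 j) (hβ j)) hTa0 hTb0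
    _ ≤ 2 * (C * ∑ j, β j) / (q * ∑ j, β j) := by
        gcongr
        rw [mul_sum]
        refine sum_le_sum fun j _ => ?_
        rw [← sub_mul, abs_mul, abs_of_nonneg (hβ j)]
        exact mul_le_mul_of_nonneg_right (hC j) (hβ j)
    _ = 2 * C / q := by field_simp

theorem sum_abs_predFilter_sub_le_two_mul [NeZero k] (hq0 : 0 < q) (hkq : (k : ℝ) * q < 1)
    (hQ : rowStochasticGe q Q) (hf0 : ∀ j x, 0 ≤ f j x) (n : ℕ) (y : ℕ → Fin d → ℝ)
    (hpos : ∀ s < n, 0 < ∑ j, f j (y s)) {a b : Fin k → ℝ} (ha : inSimplexGe q a)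
    (hb : inSimplexGe q b) :
    ∑ i, |predFilter a Q f y n i - predFilter b Q f y n i| ≤ 2 * mixRho k q ^ n := by
  refine (sum_abs_predFilter_sub_le hq0 hkq hQ hf0 n y hpos ha hb (C := 1) fun j =>
    abs_sub_le_of_nonneg_of_le (ha.1.1 j) (ha.1.le_one j) (hb.1.1 j) (hb.1.le_one j)).trans ?_
  rw [mul_comm]
  exact mul_le_mul_of_nonneg_right (min_le_left _ _) (pow_nonneg (mixRho_pos hq0 hkq).le n)

end Forgetting

section OneStep

variable {k : ℕ}

lemma abs_sub_le_matDist (Q Q' : Fin k → Fin k → ℝ) (i j : Fin k) :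
    |Q i j - Q' i j| ≤ matDist Q Q' := by
  exact (le_ciSup (f := fun j => |Q i j - Q' i j|) (Set.finite_range _).bddAbove j).trans
    (le_ciSup (f := fun i => ⨆ j, |Q i j - Q' i j|) (Set.finite_range _).bddAbove i)

lemma abs_reweight_vecMul_sub_le {Q Qs : Fin k → Fin k → ℝ} (hQ : rowStochastic Q)
    {w g gs : Fin k → ℝ} (hw : ∀ j, 0 ≤ w j) (hg : ∀ j, 0 ≤ g j) (hgs : ∀ j, 0 ≤ gs j)
    (hS : 0 < ∑ j, w j * g j) (hSs : 0 < ∑ j, w j * gs j) (i : Fin k) :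
    |(reweight w gs ᵥ* Qs) i - (reweight w g ᵥ* Q) i| ≤
      matDist Q Qs + (∑ l, |gs l - g l| * w l) / ∑ j, gs j * w j := by
  set us := reweight w gs
  set u := reweight w g
  have hus : inSimplex us := ⟨reweight_nonneg hw hgs, sum_reweight hSs.ne'⟩
  have hu : inSimplex u := ⟨reweight_nonneg hw hg, sum_reweight hS.ne'⟩
  have hsplit : (us ᵥ* Qs) i - (u ᵥ* Q) i =
      ∑ j, us j * (Qs j i - Q j i) + ∑ j, Q j i * (us j - u j) := by
    simp only [vecMul, dotProduct, ← sum_add_distrib, ← sum_sub_distrib]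
    exact sum_congr rfl fun j _ => by ring
  have hchange : |∑ j, us j * (Qs j i - Q j i)| ≤ matDist Q Qs :=
    calc |∑ j, us j * (Qs j i - Q j i)| ≤ ∑ j, us j * matDist Q Qs := by
          refine (abs_sum_le_sum_abs _ _).trans (sum_le_sum fun j _ => ?_)
          rw [abs_mul, abs_of_nonneg (hus.1 j), abs_sub_comm]
          exact mul_le_mul_of_nonneg_left (abs_sub_le_matDist Q Qs j i) (hus.1 j)
      _ = matDist Q Qs := by rw [← sum_mul, hus.2, one_mul]
  have hcond : |∑ j, Q j i * (us j - u j)| ≤ (∑ l, |gs l - g l| * w l) / ∑ j, gs j * w j := by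
    refine (abs_sum_mul_le_half (fun j => (hQ j).1 i) (fun j => (hQ j).le_one i)
      (by rw [sum_sub_distrib, hus.2, hu.2, sub_self])).trans ?_
    have hnorm := sum_abs_div_sum_sub_div_sum_le _ _ (fun j => mul_nonneg (hw j) (hg j)) hS hSs
    simp only [abs_sub_comm (w _ * g _ / _)] at hnorm
    have hnum : ∑ j, |w j * g j - w j * gs j| = ∑ l, |gs l - g l| * w l :=
      sum_congr rfl fun j _ => by rw [← mul_sub, abs_mul, abs_of_nonneg (hw j), abs_sub_comm,
        mul_comm]
    have hden : ∑ j, w j * gs j = ∑ j, gs j * w j := sum_congr rfl fun j _ => mul_comm _ _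
    have hl1 : ∑ j, |us j - u j| ≤ 2 * ((∑ l, |gs l - g l| * w l) / ∑ j, gs j * w j) := by
      rw [← hnum, ← hden, ← mul_div_assoc]
      exact hnorm
    linarith
  rw [hsplit]
  exact (abs_add_le _ _).trans (add_le_add hchange hcond)

end OneStep

lemma min_two_le_two_mul_add_min {q M X : ℝ} {k : ℕ} (hq0 : 0 < q) (hk : 1 ≤ (k : ℝ))
    (hM : 0 ≤ M) : min 2 (2 * (M + X) / q) ≤ 2 * (M / q + min (1 / q * X) k) := by
  rcases min_cases (1 / q * X) k with ⟨hmin, -⟩ | ⟨hmin, -⟩ <;> rw [hmin]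
  · exact (min_le_right _ _).trans (le_of_eq (by ring))
  · have : 0 ≤ M / q := div_nonneg hM hq0.le
    exact (min_le_left _ _).trans (by linarith)

section Hybrid

variable {k d : ℕ} {q : ℝ} {Q Qs : Fin k → Fin k → ℝ} {f fs : Fin k → (Fin d → ℝ) → ℝ}
  {μs : Fin k → ℝ} {y : ℕ → Fin d → ℝ} {n : ℕ}

def hybridFilter (μs : Fin k → ℝ) (Qs Q : Fin k → Fin k → ℝ) (fs f : Fin k → (Fin d → ℝ) → ℝ)
    (y : ℕ → Fin d → ℝ) (n s : ℕ) : Fin k → ℝ :=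
  predFilter (predFilter μs Qs fs y s) Q f (fun u => y (s + u)) (n - s)

lemma hybridFilter_self : hybridFilter μs Qs Q fs f y n n = predFilter μs Qs fs y n := by
  rw [hybridFilter, Nat.sub_self]
  rfl

lemma hybridFilter_zero : hybridFilter μs Qs Q fs f y n 0 = predFilter μs Q f y n := by
  simp only [hybridFilter, zero_add, Nat.sub_zero]
  rfl

lemma sum_abs_hybridFilter_succ_sub_le [NeZero k] (hq0 : 0 < q) (hkq : (k : ℝ) * q < 1)
    (hQ : rowStochasticGe q Q) (hQs : rowStochasticGe q Qs) (hf0 : ∀ j x, 0 ≤ f j x)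
    (hfs0 : ∀ j x, 0 ≤ fs j x) (hμs : inSimplexGe q μs)
    (hpos : ∀ s < n, 0 < ∑ j, f j (y s) ∧ 0 < ∑ j, fs j (y s)) {s : ℕ} (hs : s < n) :
    ∑ i, |hybridFilter μs Qs Q fs f y n (s + 1) i - hybridFilter μs Qs Q fs f y n s i| ≤
      mixRho k q ^ (n - s - 1) * (2 * (matDist Q Qs / q +
        min ((1 / q) * (∑ i, |fs i (y s) - f i (y s)| * predFilter μs Qs fs y s i) /
          (∑ j, fs j (y s) * predFilter μs Qs fs y s j)) (k : ℝ))) := by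
  set w := predFilter μs Qs fs y s
  have hw : inSimplexGe q w :=
    predFilter_inSimplexGe hq0 hQs hfs0 hμs y s fun u hu => (hpos u (by omega)).2
  have hS := (mul_pos hq0 (hpos s hs).1).trans_le (mul_sum_le_sum_mul_of_le hw.2 fun j => hf0 j _)
  have hSs :=
    (mul_pos hq0 (hpos s hs).2).trans_le (mul_sum_le_sum_mul_of_le hw.2 fun j => hfs0 j _)
  have hstep : predFilter w Q f (fun u => y (s + u)) 1 = reweight w (fun j => f j (y s)) ᵥ* Q :=
    predFilter_succ w Q f _ 0
  have hsucc : hybridFilter μs Qs Q fs f y n (s + 1) =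
      predFilter (reweight w (fun j => fs j (y s)) ᵥ* Qs) Q f (fun u => y (s + 1 + u))
        (n - s - 1) := by
    rw [hybridFilter, predFilter_succ, Nat.sub_succ']
  have hcur : hybridFilter μs Qs Q fs f y n s =
      predFilter (reweight w (fun j => f j (y s)) ᵥ* Q) Q f (fun u => y (s + 1 + u))
        (n - s - 1) := by
    rw [hybridFilter]
    nth_rw 1 [show n - s = 1 + (n - s - 1) by omega]
    rw [predFilter_add, hstep]
    simp only [add_assoc]
  rw [hsucc, hcur, mul_div_assoc]
  refine (sum_abs_predFilter_sub_le hq0 hkq hQ hf0 _ _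
    (fun u hu => (hpos (s + 1 + u) (by omega)).1)
    (inSimplexGe_vecMul ⟨reweight_nonneg hw.1.1 fun j => hfs0 j _, sum_reweight hSs.ne'⟩ hQs)
    (inSimplexGe_vecMul ⟨reweight_nonneg hw.1.1 fun j => hf0 j _, sum_reweight hS.ne'⟩ hQ)
    (abs_reweight_vecMul_sub_le (fun j => (hQ j).1) hw.1.1 (fun j => hf0 j _)
      (fun j => hfs0 j _) hS hSs)).trans (mul_le_mul_of_nonneg_left ?_ (pow_nonneg
        (mixRho_pos hq0 hkq).le _))
  exact min_two_le_two_mul_add_min hq0 (Nat.one_le_cast.mpr (Nat.pos_of_neZero k))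
    ((abs_nonneg _).trans (abs_sub_le_matDist Q Qs 0 0))

end Hybrid

lemma sum_abs_sub_le_sum_range_add {ι : Type*} [Fintype ι] (G : ℕ → ι → ℝ) (W : ι → ℝ) (n : ℕ) :
    ∑ i, |G n i - W i| ≤ ∑ s ∈ range n, ∑ i, |G (s + 1) i - G s i| + ∑ i, |G 0 i - W i| := by
  rw [sum_comm, ← sum_add_distrib]
  refine sum_le_sum fun i _ => (abs_sub_le _ (G 0 i) _).trans (add_le_add ?_ le_rfl)
  rw [← sum_range_sub (fun s => G s i)]
  exact abs_sum_le_sum_abs _ _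

lemma sum_range_pow_mul_eq {ρ : ℝ} (hρ : ρ ≠ 0) (Δ : ℕ → ℝ) (n : ℕ) :
    ∑ s ∈ range n, ρ ^ (n - s - 1) * Δ (s + 1) = ρ⁻¹ * ∑ u ∈ Icc 1 n, ρ ^ u * Δ (n + 1 - u) := by
  rw [← sum_range_reflect, ← Ico_add_one_right_eq_Icc, sum_Ico_eq_sum_range, mul_sum,
    Nat.add_sub_cancel]
  refine sum_congr rfl fun j hj => ?_
  have hj := mem_range.mp hj
  rw [show n - (n - 1 - j) - 1 = j by omega, show n - 1 - j + 1 = n - j by omega,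
    show n + 1 - (1 + j) = n - j by omega, pow_add, pow_one]
  field_simp

/-- Observations are 0-indexed: the paper's `y_s` and `w_s` are `y (s - 1)` and
`predFilter … (s - 1)`. -/
theorem statement10_general (k d : ℕ)
    (lam : Measure (Fin d → ℝ))
    (q : ℝ) (hq0 : 0 < q) (hq1 : q < 1 / (k : ℝ))
    (Q Qs : Fin k → Fin k → ℝ) (hQ : rowStochasticGe q Q) (hQs : rowStochasticGe q Qs)
    (μ μs : Fin k → ℝ) (hμ : inSimplexGe q μ) (hμs : inSimplexGe q μs)
    (f fs : Fin k → (Fin d → ℝ) → ℝ)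
    (hf : ∀ j, IsDensity lam (f j)) (hfs : ∀ j, IsDensity lam (fs j))
    (t : ℕ) (ht : 1 ≤ t) (y : ℕ → (Fin d → ℝ))
    (hypos : ∀ s, s < t - 1 → 0 < ∑ j, f j (y s) ∧ 0 < ∑ j, fs j (y s))
    (Δ : ℕ → ℝ)
    (hΔ : ∀ s, s < t - 1 →
      Δ (s + 1) = matDist Q Qs / q +
        min ((1 / q) * (∑ i, |fs i (y s) - f i (y s)| * predFilter μs Qs fs y s i) /
              (∑ j, fs j (y s) * predFilter μs Qs fs y s j)) (k : ℝ)) :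
    ∑ i, |predFilter μs Qs fs y (t - 1) i - predFilter μ Q f y (t - 1) i|
      ≤ (2 / mixRho k q) * (∑ u ∈ Finset.Icc 1 (t - 1), mixRho k q ^ u * Δ (t - u))
        + 4 * mixRho k q ^ (t - 1) := by
  have : NeZero k := ⟨by rintro rfl; norm_num at hq1; linarith⟩
  have hkq : (k : ℝ) * q < 1 := by
    rwa [lt_div_iff₀ (by simp [Nat.pos_of_neZero k]), mul_comm] at hq1
  have hρ := mixRho_pos hq0 hkq
  have hf0 : ∀ j x, 0 ≤ f j x := fun j => (hf j).2.1
  have hfs0 : ∀ j x, 0 ≤ fs j x := fun j => (hfs j).2.1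
  obtain ⟨n, rfl⟩ : ∃ n, t = n + 1 := ⟨t - 1, by omega⟩
  simp only [Nat.add_sub_cancel] at hypos hΔ ⊢
  set G := hybridFilter μs Qs Q fs f y n
  have hinit : ∑ i, |G 0 i - predFilter μ Q f y n i| ≤ 2 * mixRho k q ^ n := by
    rw [show G 0 = predFilter μs Q f y n from hybridFilter_zero]
    exact sum_abs_predFilter_sub_le_two_mul hq0 hkq hQ hf0 n y (fun s hs => (hypos s hs).1) hμs hμ
  rw [show predFilter μs Qs fs y n = G n from hybridFilter_self.symm]
  calc ∑ i, |G n i - predFilter μ Q f y n i|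
      ≤ ∑ s ∈ range n, ∑ i, |G (s + 1) i - G s i| + ∑ i, |G 0 i - predFilter μ Q f y n i| :=
        sum_abs_sub_le_sum_range_add G _ n
    _ ≤ ∑ s ∈ range n, mixRho k q ^ (n - s - 1) * (2 * Δ (s + 1)) + 2 * mixRho k q ^ n :=
        add_le_add (sum_le_sum fun s hs => by
          rw [hΔ s (mem_range.mp hs)]
          exact sum_abs_hybridFilter_succ_sub_le hq0 hkq hQ hQs hf0 hfs0 hμs hypos
            (mem_range.mp hs)) hinit
    _ = 2 / mixRho k q * ∑ u ∈ Icc 1 n, mixRho k q ^ u * Δ (n + 1 - u) + 2 * mixRho k q ^ n := by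
        simp only [mul_left_comm _ (2 : ℝ), ← mul_sum, sum_range_pow_mul_eq hρ.ne']
        ring
    _ ≤ _ := by linarith [pow_pos hρ n]

/-- deterministic bound on the `ℓ¹` distance between the prediction filters
of two HMMs, via exponential forgetting. Observations are 0-indexed: paper's `y_s` is
`y (s-1)` and paper's `w_s` is `predFilter … (s-1)`, so paper's `Δ_s` is `Δ s` below. -/
theorem statement10 (k d : ℕ) (hk : 2 ≤ k)
    (lam : Measure (Fin d → ℝ)) [SigmaFinite lam]
    (q : ℝ) (hq0 : 0 < q) (hq1 : q < 1 / (k : ℝ))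
    (Q Qs : Fin k → Fin k → ℝ) (hQ : rowStochasticGe q Q) (hQs : rowStochasticGe q Qs)
    (μ μs : Fin k → ℝ) (hμ : inSimplexGe q μ) (hμs : inSimplexGe q μs)
    (f fs : Fin k → (Fin d → ℝ) → ℝ)
    (hf : ∀ j, IsDensity lam (f j)) (hfs : ∀ j, IsDensity lam (fs j))
    (t : ℕ) (ht : 1 ≤ t) (y : ℕ → (Fin d → ℝ))
    (hypos : ∀ s, s < t - 1 → 0 < ∑ j, f j (y s) ∧ 0 < ∑ j, fs j (y s))
    (Δ : ℕ → ℝ)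
    (hΔ : ∀ s, s < t - 1 →
      Δ (s + 1) = matDist Q Qs / q +
        min ((1 / q) * (∑ i, |fs i (y s) - f i (y s)| * predFilter μs Qs fs y s i) /
              (∑ j, fs j (y s) * predFilter μs Qs fs y s j)) (k : ℝ)) :
    ∑ i, |predFilter μs Qs fs y (t - 1) i - predFilter μ Q f y (t - 1) i|
      ≤ (2 / mixRho k q) * (∑ u ∈ Finset.Icc 1 (t - 1), mixRho k q ^ u * Δ (t - u))
        + 4 * mixRho k q ^ (t - 1) :=
  statement10_general k d lam q hq0 hq1 Q Qs hQ hQs μ μs hμ hμs f fs hf hfs t ht y hypos Δ hΔ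
end
end

section
/- Let k ≥ 1, q ∈ (0,1), w, w* ∈ Δ_k(q), and let a_1,…,a_k, b_1,…,b_k be positive reals. Then log²( (Σ_i w*_i a_i)/(Σ_i w_i b_i) ) ≤ 2 max_{1≤j≤k} log²(a_j/b_j) + (2/q²) ( Σ_{j=1}^k |w*_j − w_j| )². -/
open MeasureTheory Filter Real

noncomputable section

/-!
Write `log (Σ w*ᵢ aᵢ / Σ wᵢ bᵢ) = log (Σ w*ᵢ aᵢ / Σ wᵢ aᵢ) + log (Σ wᵢ aᵢ / Σ wᵢ bᵢ)` and use
`(x + y)² ≤ 2x² + 2y²`. The second ratio is a weighted mean of the ratios `aⱼ / bⱼ`, so its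
logarithm lies between the smallest and the largest `log (aⱼ / bⱼ)`. For the first, both sums
are at least `q · max a` while they differ by at most `max a · Σ |w*ⱼ - wⱼ|`, and `log` is
`1/m`-Lipschitz on `[m, ∞)`.
-/

open Finset

lemma log_sub_log_le_div {x y m : ℝ} (hm : 0 < m) (hmx : m ≤ x) (hmy : m ≤ y) :
    log x - log y ≤ |x - y| / m := by
  have hx : 0 < x := hm.trans_le hmx
  have hy : 0 < y := hm.trans_le hmy
  calc log x - log y = log (x / y) := (log_div hx.ne' hy.ne').symm
    _ ≤ x / y - 1 := log_le_sub_one_of_pos (div_pos hx hy)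
    _ = (x - y) / y := by field_simp
    _ ≤ |x - y| / y := by gcongr; exact le_abs_self _
    _ ≤ |x - y| / m := by gcongr

lemma abs_log_sub_log_le_div {x y m : ℝ} (hm : 0 < m) (hmx : m ≤ x) (hmy : m ≤ y) :
    |log x - log y| ≤ |x - y| / m := by
  refine abs_sub_le_iff.mpr ⟨log_sub_log_le_div hm hmx hmy, ?_⟩
  rw [abs_sub_comm]
  exact log_sub_log_le_div hm hmy hmx

section WeightedSums

variable {ι : Type*} [Fintype ι]

lemma abs_sum_mul_sub_sum_mul_le {v w a : ι → ℝ} {M : ℝ} (ha : ∀ i, |a i| ≤ M) :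
    |∑ i, v i * a i - ∑ i, w i * a i| ≤ (∑ i, |v i - w i|) * M := by
  rw [← sum_sub_distrib, sum_mul]
  calc |∑ i, (v i * a i - w i * a i)| ≤ ∑ i, |v i * a i - w i * a i| := abs_sum_le_sum_abs _ _
    _ ≤ ∑ i, |v i - w i| * M := by
      refine sum_le_sum fun i _ => ?_
      rw [← sub_mul, abs_mul]
      exact mul_le_mul_of_nonneg_left (ha i) (abs_nonneg _)

lemma sum_mul_div_sum_mul_le {w a b : ι → ℝ} {c : ℝ} (hw : ∀ i, 0 ≤ w i) (hb : ∀ i, 0 < b i)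
    (hS : 0 < ∑ i, w i * b i) (hc : ∀ i, a i / b i ≤ c) :
    (∑ i, w i * a i) / ∑ i, w i * b i ≤ c := by
  rw [div_le_iff₀ hS, mul_sum]
  refine sum_le_sum fun i _ => ?_
  have : a i ≤ c * b i := (div_le_iff₀ (hb i)).mp (hc i)
  nlinarith [hw i]

lemma le_sum_mul_div_sum_mul {w a b : ι → ℝ} {c : ℝ} (hw : ∀ i, 0 ≤ w i) (hb : ∀ i, 0 < b i)
    (hS : 0 < ∑ i, w i * b i) (hc : ∀ i, c ≤ a i / b i) :
    c ≤ (∑ i, w i * a i) / ∑ i, w i * b i := by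
  rw [le_div_iff₀ hS, mul_sum]
  refine sum_le_sum fun i _ => ?_
  have : c * b i ≤ a i := (le_div_iff₀ (hb i)).mp (hc i)
  nlinarith [hw i]

lemma sq_le_ciSup_sq [Nonempty ι] (f : ι → ℝ) {x : ℝ} {i j : ι} (hi : f i ≤ x)
    (hj : x ≤ f j) : x ^ 2 ≤ ⨆ l, f l ^ 2 := by
  have hbdd : BddAbove (Set.range fun l => f l ^ 2) := (Set.finite_range _).bddAbove
  rcases le_total 0 x with hx | hx
  · exact (by nlinarith : x ^ 2 ≤ f j ^ 2).trans (le_ciSup hbdd j)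
  · exact (by nlinarith : x ^ 2 ≤ f i ^ 2).trans (le_ciSup hbdd i)

variable [Nonempty ι]

lemma sq_log_sum_mul_div_sum_mul_le {w a b : ι → ℝ} (hw : ∀ i, 0 < w i) (ha : ∀ i, 0 < a i)
    (hb : ∀ i, 0 < b i) :
    log ((∑ i, w i * a i) / ∑ i, w i * b i) ^ 2 ≤ ⨆ j, log (a j / b j) ^ 2 := by
  have hSa : 0 < ∑ i, w i * a i := sum_pos (fun i _ => mul_pos (hw i) (ha i)) univ_nonempty
  have hSb : 0 < ∑ i, w i * b i := sum_pos (fun i _ => mul_pos (hw i) (hb i)) univ_nonempty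
  obtain ⟨jmax, hjmax⟩ := Finite.exists_max fun j => a j / b j
  obtain ⟨jmin, hjmin⟩ := Finite.exists_min fun j => a j / b j
  have hw' : ∀ i, 0 ≤ w i := fun i => (hw i).le
  refine sq_le_ciSup_sq (fun j => log (a j / b j)) (i := jmin) (j := jmax) ?_ ?_
  · exact log_le_log (div_pos (ha jmin) (hb jmin)) (le_sum_mul_div_sum_mul hw' hb hSb hjmin)
  · exact log_le_log (div_pos hSa hSb) (sum_mul_div_sum_mul_le hw' hb hSb hjmax)

lemma abs_log_sum_mul_sub_log_sum_mul_le {q : ℝ} (hq : 0 < q) {v w a : ι → ℝ}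
    (hv : ∀ i, q ≤ v i) (hw : ∀ i, q ≤ w i) (ha : ∀ i, 0 < a i) :
    |log (∑ i, v i * a i) - log (∑ i, w i * a i)| ≤ (∑ i, |v i - w i|) / q := by
  obtain ⟨imax, himax⟩ := Finite.exists_max a
  have hM : 0 < a imax := ha imax
  have hlow : ∀ u : ι → ℝ, (∀ i, q ≤ u i) → q * a imax ≤ ∑ i, u i * a i := fun u hu =>
    calc q * a imax ≤ u imax * a imax := mul_le_mul_of_nonneg_right (hu imax) hM.le
      _ ≤ ∑ i, u i * a i :=
        single_le_sum (fun i _ => (mul_pos (hq.trans_le (hu i)) (ha i)).le) (mem_univ imax)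
  have hdiff := abs_sum_mul_sub_sum_mul_le (v := v) (w := w) fun i =>
    (abs_of_pos (ha i)).trans_le (himax i)
  calc |log (∑ i, v i * a i) - log (∑ i, w i * a i)|
      ≤ |∑ i, v i * a i - ∑ i, w i * a i| / (q * a imax) :=
        abs_log_sub_log_le_div (mul_pos hq hM) (hlow v hv) (hlow w hw)
    _ ≤ (∑ i, |v i - w i|) * a imax / (q * a imax) := by gcongr
    _ = (∑ i, |v i - w i|) / q := mul_div_mul_right _ _ hM.ne'

end WeightedSums

theorem statement17_general (k : ℕ) (hk : 1 ≤ k) (q : ℝ) (hq0 : 0 < q)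
    (w ws : Fin k → ℝ) (hw : inSimplexGe q w) (hws : inSimplexGe q ws)
    (a b : Fin k → ℝ) (ha : ∀ i, 0 < a i) (hb : ∀ i, 0 < b i) :
    (Real.log ((∑ i, ws i * a i) / (∑ i, w i * b i))) ^ 2
      ≤ 2 * (⨆ j, (Real.log (a j / b j)) ^ 2)
        + (2 / q ^ 2) * (∑ j, |ws j - w j|) ^ 2 := by
  have : Nonempty (Fin k) := Fin.pos_iff_nonempty.mp hk
  have hwpos : ∀ i, 0 < w i := fun i => hq0.trans_le (hw.2 i)
  have hwspos : ∀ i, 0 < ws i := fun i => hq0.trans_le (hws.2 i)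
  set S₁ := ∑ i, ws i * a i
  set S₂ := ∑ i, w i * a i
  set S₃ := ∑ i, w i * b i
  have hS₁ : 0 < S₁ := sum_pos (fun i _ => mul_pos (hwspos i) (ha i)) univ_nonempty
  have hS₂ : 0 < S₂ := sum_pos (fun i _ => mul_pos (hwpos i) (ha i)) univ_nonempty
  have hS₃ : 0 < S₃ := sum_pos (fun i _ => mul_pos (hwpos i) (hb i)) univ_nonempty
  have hsplit : log (S₁ / S₃) = (log S₁ - log S₂) + log (S₂ / S₃) := by
    rw [log_div hS₁.ne' hS₃.ne', log_div hS₂.ne' hS₃.ne']; ring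
  have hshift : (log S₁ - log S₂) ^ 2 ≤ ((∑ j, |ws j - w j|) / q) ^ 2 :=
    sq_le_sq.mpr ((abs_log_sum_mul_sub_log_sum_mul_le hq0 hws.2 hw.2 ha).trans (le_abs_self _))
  calc log (S₁ / S₃) ^ 2 ≤ 2 * ((log S₁ - log S₂) ^ 2 + log (S₂ / S₃) ^ 2) := hsplit ▸ add_sq_le
    _ ≤ 2 * (((∑ j, |ws j - w j|) / q) ^ 2 + ⨆ j, log (a j / b j) ^ 2) := by
      gcongr
      exact sq_log_sum_mul_div_sum_mul_le hwpos ha hb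
    _ = _ := by ring

/-- `log²((Σ w*_i a_i)/(Σ w_i b_i)) ≤ 2 max_j log²(a_j/b_j) + (2/q²)(Σ_j |w*_j − w_j|)²`. -/
theorem statement17 (k : ℕ) (hk : 1 ≤ k) (q : ℝ) (hq0 : 0 < q) (hq1 : q < 1)
    (w ws : Fin k → ℝ) (hw : inSimplexGe q w) (hws : inSimplexGe q ws)
    (a b : Fin k → ℝ) (ha : ∀ i, 0 < a i) (hb : ∀ i, 0 < b i) :
    (Real.log ((∑ i, ws i * a i) / (∑ i, w i * b i))) ^ 2
      ≤ 2 * (⨆ j, (Real.log (a j / b j)) ^ 2)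
        + (2 / q ^ 2) * (∑ j, |ws j - w j|) ^ 2 :=
  statement17_general k hk q hq0 w ws hw hws a b ha hb
end
end
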